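/- arXiv:2201.05737 — 2 statements merged into one kernel-verified Lean document; each statement's English description precedes it below -/
import Mathlib

section
/- Unreachability of global optimum in one iteration: suppose ξ* - ξ ≤ β(η* - η)^2 where ξ* = ξ_{η*} is the mean-variance of an optimal policy with transition matrix P* and mean-variance reward f*, ξ is the current mean-variance with matrix P and reward f, and u is the current value function. Then the pseudo optimum satisfies ξ*_η - ξ = μ (I - αP*)^{-1}[ (1-α)(f*_η - f) + α(P* - P)u ] ≤ 0, and consequently there exists a state index x such that [(1-α) f*_η + α P* u](x) ≤ [(1-α) f + α P u](x). -/
/-!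
Let `B = 1 - α P*`. The value `u` solves the Bellman equation `(1 - α P) u = (1 - α) f`, so
`v = (1 - α)(f*_η - f) + α (P* - P) u` equals `(1 - α) f*_η - B u`, whence
`B⁻¹ v = (1 - α) B⁻¹ f*_η - u`; pairing with `μ` gives `ξ*_η - ξ = μ B⁻¹ v ≤ 0`.
By the minimum principle for the row-stochastic `P*`, `B⁻¹` maps positive vectors to positive
vectors, so `v` cannot be positive at every state.
-/

open Matrix

section LinftyOpNorm

open scoped Matrix.Norms.Operator

variable {ι : Type*} [Fintype ι] [DecidableEq ι]

lemma Matrix.linfty_opNorm_le_one_of_mem_rowStochastic {Q : Matrix ι ι ℝ}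
    (hQ : Q ∈ rowStochastic ℝ ι) : ‖Q‖ ≤ 1 := by
  rw [linfty_opNorm_def, NNReal.coe_le_one, Finset.sup_le_iff]
  intro i _
  rw [← NNReal.coe_le_one, NNReal.coe_sum]
  simp only [coe_nnnorm, Real.norm_eq_abs, abs_of_nonneg (nonneg_of_mem_rowStochastic hQ),
    sum_row_of_mem_rowStochastic hQ i, le_refl]

lemma Matrix.isUnit_one_sub_smul_of_mem_rowStochastic {Q : Matrix ι ι ℝ}
    (hQ : Q ∈ rowStochastic ℝ ι) {α : ℝ} (hα : |α| < 1) : IsUnit (1 - α • Q) := by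
  refine isUnit_one_sub_of_norm_lt_one ?_
  calc ‖α • Q‖ = |α| * ‖Q‖ := by rw [norm_smul, Real.norm_eq_abs]
    _ ≤ |α| * 1 := by gcongr; exact linfty_opNorm_le_one_of_mem_rowStochastic hQ
    _ < 1 := by rwa [mul_one]

end LinftyOpNorm

section DiscountedValue

variable {ι R : Type*} [Fintype ι] [DecidableEq ι] [CommRing R]

noncomputable def discountedValue (α : R) (P : Matrix ι ι R) (f : ι → R) : ι → R :=
  (1 - α) • ((1 - α • P)⁻¹ *ᵥ f)

lemma one_sub_smul_mulVec_discountedValue {α : R} {P : Matrix ι ι R} (hP : IsUnit (1 - α • P))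
    (f : ι → R) : (1 - α • P) *ᵥ discountedValue α P f = (1 - α) • f := by
  rw [discountedValue, mulVec_smul, mulVec_mulVec,
    mul_nonsing_inv _ ((isUnit_iff_isUnit_det _).mp hP), one_mulVec]

theorem discountedValue_sub_discountedValue {α : R} {P Q : Matrix ι ι R}
    (hP : IsUnit (1 - α • P)) (hQ : IsUnit (1 - α • Q)) (f g : ι → R) :
    discountedValue α Q g - discountedValue α P f =
      (1 - α • Q)⁻¹ *ᵥ ((1 - α) • (g - f) + α • ((Q - P) *ᵥ discountedValue α P f)) := by
  set u := discountedValue α P f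
  have hbellman : (1 - α) • (g - f) + α • ((Q - P) *ᵥ u) = (1 - α) • g - (1 - α • Q) *ᵥ u := by
    rw [smul_sub, ← one_sub_smul_mulVec_discountedValue hP f]
    simp only [sub_mulVec, one_mulVec, smul_mulVec]
    module
  rw [hbellman, mulVec_sub, mulVec_mulVec, nonsing_inv_mul _ ((isUnit_iff_isUnit_det _).mp hQ),
    one_mulVec, mulVec_smul, discountedValue]

end DiscountedValue

section MinimumPrinciple

variable {ι : Type*} [Fintype ι] [DecidableEq ι]

lemma Matrix.pos_of_one_sub_smul_mulVec_pos {Q : Matrix ι ι ℝ} (hQ : Q ∈ rowStochastic ℝ ι)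
    {α : ℝ} (hα0 : 0 ≤ α) (hα1 : α < 1) {w : ι → ℝ} (hw : ∀ i, 0 < ((1 - α • Q) *ᵥ w) i)
    (i : ι) : 0 < w i := by
  obtain ⟨m, -, hm⟩ := Finset.exists_min_image Finset.univ w ⟨i, Finset.mem_univ i⟩
  have hmean : w m ≤ (Q *ᵥ w) m :=
    calc w m = ∑ j, Q m j * w m := by
          rw [← Finset.sum_mul, sum_row_of_mem_rowStochastic hQ, one_mul]
      _ ≤ ∑ j, Q m j * w j := Finset.sum_le_sum fun j _ =>
          mul_le_mul_of_nonneg_left (hm j (Finset.mem_univ j)) (nonneg_of_mem_rowStochastic hQ)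
  have hwm : 0 < ((1 - α • Q) *ᵥ w) m := hw m
  simp only [sub_mulVec, one_mulVec, smul_mulVec, Pi.sub_apply, Pi.smul_apply, smul_eq_mul]
    at hwm
  have hwm_pos : 0 < w m := by nlinarith
  exact hwm_pos.trans_le (hm i (Finset.mem_univ i))

lemma Matrix.exists_nonpos_of_dotProduct_inv_one_sub_smul_mulVec_nonpos
    {Q : Matrix ι ι ℝ} (hQ : Q ∈ rowStochastic ℝ ι) {α : ℝ} (hα0 : 0 ≤ α) (hα1 : α < 1)
    {μ : ι → ℝ} (hμ : ∀ i, 0 ≤ μ i) (hμ0 : μ ≠ 0) {v : ι → ℝ}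
    (h : μ ⬝ᵥ ((1 - α • Q)⁻¹ *ᵥ v) ≤ 0) : ∃ x, v x ≤ 0 := by
  by_contra! hv
  have hQunit := isUnit_one_sub_smul_of_mem_rowStochastic hQ (abs_lt.mpr ⟨by linarith, hα1⟩)
  have hw : ∀ i, 0 < ((1 - α • Q)⁻¹ *ᵥ v) i := by
    refine pos_of_one_sub_smul_mulVec_pos hQ hα0 hα1 fun i => ?_
    rw [mulVec_mulVec, mul_nonsing_inv _ ((isUnit_iff_isUnit_det _).mp hQunit), one_mulVec]
    exact hv i
  obtain ⟨j, hj⟩ : ∃ j, μ j ≠ 0 := by simpa [funext_iff] using hμ0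
  have hpos : 0 < μ ⬝ᵥ ((1 - α • Q)⁻¹ *ᵥ v) :=
    Finset.sum_pos' (fun i _ => mul_nonneg (hμ i) (hw i).le)
      ⟨j, Finset.mem_univ j, mul_pos ((hμ j).lt_of_ne' hj) (hw j)⟩
  linarith

end MinimumPrinciple

theorem stmt_13_general {n : ℕ} (P Pstar : Matrix (Fin n) (Fin n) ℝ)
    (hPnn : ∀ i j, 0 ≤ P i j) (hProw : ∀ i, ∑ j, P i j = 1)
    (hPsnn : ∀ i j, 0 ≤ Pstar i j) (hPsrow : ∀ i, ∑ j, Pstar i j = 1)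
    (μ : Fin n → ℝ) (hμnn : ∀ i, 0 ≤ μ i) (hμsum : ∑ i, μ i = 1)
    (α β : ℝ) (hα0 : 0 < α) (hα1 : α < 1)
    (f fstar : Fin n → ℝ) (u : Fin n → ℝ)
    (hu : u = (1 - α) • ((1 - α • P)⁻¹ *ᵥ f))
    (ξ ξstar η ηstar ξstarη : ℝ)
    (hξ : ξ = μ ⬝ᵥ u)
    (hξsη : ξstarη = ξstar - β * (ηstar - η) ^ 2)
    (hξsη' : ξstarη = μ ⬝ᵥ ((1 - α) • ((1 - α • Pstar)⁻¹ *ᵥ fstar)))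
    (hgap : ξstar - ξ ≤ β * (ηstar - η) ^ 2) :
    (ξstarη - ξ =
      μ ⬝ᵥ ((1 - α • Pstar)⁻¹ *ᵥ
        ((1 - α) • (fstar - f) + α • ((Pstar - P) *ᵥ u)))) ∧
    (ξstarη - ξ ≤ 0) ∧
    (∃ x : Fin n, ((1 - α) • fstar + α • (Pstar *ᵥ u)) x ≤
        ((1 - α) • f + α • (P *ᵥ u)) x) := by
  have hP : P ∈ rowStochastic ℝ (Fin n) := mem_rowStochastic_iff_sum.mpr ⟨hPnn, hProw⟩
  have hPstar : Pstar ∈ rowStochastic ℝ (Fin n) := mem_rowStochastic_iff_sum.mpr ⟨hPsnn, hPsrow⟩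
  have hα : |α| < 1 := abs_lt.mpr ⟨by linarith, hα1⟩
  have hdiff : ξstarη - ξ = μ ⬝ᵥ ((1 - α • Pstar)⁻¹ *ᵥ
      ((1 - α) • (fstar - f) + α • ((Pstar - P) *ᵥ u))) := by
    rw [hξsη', hξ, ← dotProduct_sub, hu]
    exact congrArg (μ ⬝ᵥ ·) (discountedValue_sub_discountedValue
      (isUnit_one_sub_smul_of_mem_rowStochastic hP hα)
      (isUnit_one_sub_smul_of_mem_rowStochastic hPstar hα) f fstar)
  have hle : ξstarη - ξ ≤ 0 := by rw [hξsη]; linarith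
  refine ⟨hdiff, hle, ?_⟩
  have hμ0 : μ ≠ 0 := fun h => by simp [h] at hμsum
  obtain ⟨x, hx⟩ := exists_nonpos_of_dotProduct_inv_one_sub_smul_mulVec_nonpos hPstar hα0.le hα1
    hμnn hμ0 (hdiff ▸ hle)
  refine ⟨x, sub_nonpos.mp (Eq.trans_le ?_ hx)⟩
  simp only [sub_mulVec, Pi.add_apply, Pi.sub_apply, Pi.smul_apply, smul_eq_mul]
  ring

/-- Unreachability of the global optimum in one iteration: if
`ξ* - ξ ≤ β(η* - η)²`, then the pseudo optimum satisfies
`ξ*_η - ξ = μ (I - αP*)⁻¹[(1-α)(f*_η - f) + α(P* - P)u] ≤ 0`, and consequently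
there is a state `x` with `[(1-α) f*_η + α P* u](x) ≤ [(1-α) f + α P u](x)`. -/
theorem stmt_13 {n : ℕ} (P Pstar : Matrix (Fin n) (Fin n) ℝ)
    (hPnn : ∀ i j, 0 ≤ P i j) (hProw : ∀ i, ∑ j, P i j = 1)
    (hPsnn : ∀ i j, 0 ≤ Pstar i j) (hPsrow : ∀ i, ∑ j, Pstar i j = 1)
    (μ : Fin n → ℝ) (hμnn : ∀ i, 0 ≤ μ i) (hμsum : ∑ i, μ i = 1)
    (α β : ℝ) (hα0 : 0 < α) (hα1 : α < 1) (hβ : 0 < β)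
    (f fstar : Fin n → ℝ) (u : Fin n → ℝ)
    (hu : u = (1 - α) • ((1 - α • P)⁻¹ *ᵥ f))
    (ξ ξstar η ηstar ξstarη : ℝ)
    (hξ : ξ = μ ⬝ᵥ u)
    (hξsη : ξstarη = ξstar - β * (ηstar - η) ^ 2)
    (hξsη' : ξstarη = μ ⬝ᵥ ((1 - α) • ((1 - α • Pstar)⁻¹ *ᵥ fstar)))
    (hgap : ξstar - ξ ≤ β * (ηstar - η) ^ 2) :
    (ξstarη - ξ =
      μ ⬝ᵥ ((1 - α • Pstar)⁻¹ *ᵥ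
        ((1 - α) • (fstar - f) + α • ((Pstar - P) *ᵥ u)))) ∧
    (ξstarη - ξ ≤ 0) ∧
    (∃ x : Fin n, ((1 - α) • fstar + α • (Pstar *ᵥ u)) x ≤
        ((1 - α) • f + α • (P *ᵥ u)) x) :=
  stmt_13_general P Pstar hPnn hProw hPsnn hPsrow μ hμnn hμsum α β hα0 hα1 f fstar u hu ξ ξstar η
    ηstar ξstarη hξ hξsη hξsη' hgap
end

section
/- Mixed-policy transition and reward interpolation: if P, P' are stochastic matrices and f_λ, f'_λ reward vectors, then for δ ∈ [0,1], P^δ := P + δ(P' - P) is a stochastic matrix, and with ξ^δ := ξ of the interpolated system, the performance difference satisfies ξ^δ - ξ = δ · μ (I - α P^δ)^{-1} [ (1-α)(f'_λ - f_λ) + α (P' - P) u_λ ] + β(η^δ - λ)^2 - β(η - λ)^2, where u_λ = (1-α)(I - αP)^{-1} f_λ. -/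
/-!
`P^δ` is a convex combination of `P` and `P'`, hence stochastic, so both `1 - α P` and
`1 - α P^δ` are invertible (they are strictly diagonally dominant). The difference of the
discounted values `(1 - α)(1 - α P^δ)⁻¹ f^δ_λ - u_λ` then follows from the second resolvent
identity, since `(1 - α P) - (1 - α P^δ) = δ α (P' - P)` and `f^δ_λ - f_λ = δ (f'_λ - f_λ)`;
the variance penalties are carried along unchanged.
-/

open Matrix

namespace Matrix

variable {ι : Type*} [Fintype ι] [DecidableEq ι]

theorem add_smul_sub_mem_rowStochastic {R : Type*} [Field R] [LinearOrder R]
    [IsStrictOrderedRing R] {P P' : Matrix ι ι R} (hP : P ∈ rowStochastic R ι)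
    (hP' : P' ∈ rowStochastic R ι) {δ : R} (hδ0 : 0 ≤ δ) (hδ1 : δ ≤ 1) :
    P + δ • (P' - P) ∈ rowStochastic R ι := by
  rw [show P + δ • (P' - P) = (1 - δ) • P + δ • P' by module]
  exact convex_rowStochastic hP hP' (sub_nonneg.2 hδ1) hδ0 (sub_add_cancel 1 δ)

/-- By Gershgorin: `1 - α • P` is strictly diagonally dominant, since in row `k` the
off-diagonal sum `|α| (1 - P k k)` is below `1 - |α| P k k`. -/
theorem isUnit_one_sub_smul_of_mem_rowStochastic_s17 {P : Matrix ι ι ℝ}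
    (hP : P ∈ rowStochastic ℝ ι) {α : ℝ} (hα : |α| < 1) : IsUnit (1 - α • P) := by
  rw [isUnit_iff_isUnit_det, isUnit_iff_ne_zero]
  refine det_ne_zero_of_sum_row_lt_diag fun k => ?_
  have hoff : ∑ j ∈ Finset.univ.erase k, ‖(1 - α • P) k j‖ = |α| * (1 - P k k) := by
    rw [← sum_row_of_mem_rowStochastic hP k, ← Finset.sum_erase_eq_sub (Finset.mem_univ k),
      Finset.mul_sum]
    refine Finset.sum_congr rfl fun j hj => ?_
    rw [sub_apply, one_apply_ne (Finset.ne_of_mem_erase hj).symm, smul_apply, smul_eq_mul,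
      zero_sub, Real.norm_eq_abs, abs_neg, abs_mul,
      abs_of_nonneg (nonneg_of_mem_rowStochastic hP)]
  have hPkk : 0 ≤ P k k := nonneg_of_mem_rowStochastic hP
  have hdiag : 1 - |α| * P k k ≤ ‖(1 - α • P) k k‖ := by
    rw [sub_apply, one_apply_eq, smul_apply, smul_eq_mul, Real.norm_eq_abs]
    exact (sub_le_sub_left (mul_le_mul_of_nonneg_right (le_abs_self α) hPkk) 1).trans
      (le_abs_self _)
  nlinarith [le_one_of_mem_rowStochastic hP (i := k) (j := k)]

/-- The second resolvent identity `B⁻¹ - A⁻¹ = B⁻¹ (A - B) A⁻¹`, applied to vectors. -/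
theorem inv_mulVec_sub_inv_mulVec {R : Type*} [CommRing R] {A B : Matrix ι ι R}
    (hA : IsUnit A) (hB : IsUnit B) (v w : ι → R) :
    B⁻¹ *ᵥ w - A⁻¹ *ᵥ v = B⁻¹ *ᵥ (w - v + (A - B) *ᵥ (A⁻¹ *ᵥ v)) := by
  rw [mulVec_add, mulVec_mulVec, mulVec_mulVec,
    ← inv_sub_inv (iff_of_true hB hA), mulVec_sub, sub_mulVec]
  abel

end Matrix

theorem stmt_17_general {n : ℕ} (P P' : Matrix (Fin n) (Fin n) ℝ)
    (hPnn : ∀ i j, 0 ≤ P i j) (hProw : ∀ i, ∑ j, P i j = 1)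
    (hP'nn : ∀ i j, 0 ≤ P' i j) (hP'row : ∀ i, ∑ j, P' i j = 1)
    (μ : Fin n → ℝ)
    (α β : ℝ) (hα0 : 0 < α) (hα1 : α < 1)
    (δ : ℝ) (hδ0 : 0 ≤ δ) (hδ1 : δ ≤ 1)
    (l : ℝ) (fl fl' : Fin n → ℝ)
    (Pδ : Matrix (Fin n) (Fin n) ℝ) (hPδ : Pδ = P + δ • (P' - P))
    (flδ : Fin n → ℝ) (hflδ : flδ = fl + δ • (fl' - fl))
    (ul : Fin n → ℝ) (hul : ul = (1 - α) • ((1 - α • P)⁻¹ *ᵥ fl))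
    (η ηδ ξ ξδ : ℝ)
    (hξ : ξ = (1 - α) * ((μ ᵥ* (1 - α • P)⁻¹) ⬝ᵥ fl) + β * (η - l) ^ 2)
    (hξδ : ξδ = (1 - α) * ((μ ᵥ* (1 - α • Pδ)⁻¹) ⬝ᵥ flδ) + β * (ηδ - l) ^ 2) :
    (∀ i j, 0 ≤ Pδ i j) ∧ (∀ i, ∑ j, Pδ i j = 1) ∧
    ξδ - ξ =
      δ * (μ ⬝ᵥ ((1 - α • Pδ)⁻¹ *ᵥ ((1 - α) • (fl' - fl) + α • ((P' - P) *ᵥ ul))))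
        + β * (ηδ - l) ^ 2 - β * (η - l) ^ 2 := by
  have hP := mem_rowStochastic_iff_sum.2 ⟨hPnn, hProw⟩
  have hP' := mem_rowStochastic_iff_sum.2 ⟨hP'nn, hP'row⟩
  have hPδ_mem : Pδ ∈ rowStochastic ℝ (Fin n) :=
    hPδ ▸ add_smul_sub_mem_rowStochastic hP hP' hδ0 hδ1
  obtain ⟨hPδnn, hPδrow⟩ := mem_rowStochastic_iff_sum.1 hPδ_mem
  refine ⟨hPδnn, hPδrow, ?_⟩
  have hα : |α| < 1 := abs_lt.2 ⟨by linarith, hα1⟩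
  have hvalue : (1 - α) • ((1 - α • Pδ)⁻¹ *ᵥ flδ - (1 - α • P)⁻¹ *ᵥ fl) =
      δ • ((1 - α • Pδ)⁻¹ *ᵥ ((1 - α) • (fl' - fl) + α • ((P' - P) *ᵥ ul))) := by
    rw [inv_mulVec_sub_inv_mulVec (isUnit_one_sub_smul_of_mem_rowStochastic_s17 hP hα)
      (isUnit_one_sub_smul_of_mem_rowStochastic_s17 hPδ_mem hα), ← mulVec_smul, ← mulVec_smul]
    congr 1
    subst hPδ hflδ hul
    simp only [sub_sub_sub_cancel_left, ← smul_sub, add_sub_cancel_left, smul_mulVec,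
      mulVec_smul]
    module
  have hdot := congrArg (μ ⬝ᵥ ·) hvalue
  simp only [dotProduct_smul, dotProduct_sub, smul_eq_mul] at hdot
  rw [hξδ, hξ, ← dotProduct_mulVec, ← dotProduct_mulVec]
  linarith

/-- Mixed-policy interpolation: `P^δ = P + δ(P' - P)` is stochastic, and the
performance difference of the interpolated system satisfies
`ξ^δ - ξ = δ μ (I - αP^δ)⁻¹[(1-α)(f'_λ - f_λ) + α(P'-P)u_λ] + β(η^δ-λ)² - β(η-λ)²`. -/
theorem stmt_17 {n : ℕ} (P P' : Matrix (Fin n) (Fin n) ℝ)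
    (hPnn : ∀ i j, 0 ≤ P i j) (hProw : ∀ i, ∑ j, P i j = 1)
    (hP'nn : ∀ i j, 0 ≤ P' i j) (hP'row : ∀ i, ∑ j, P' i j = 1)
    (μ : Fin n → ℝ) (hμnn : ∀ i, 0 ≤ μ i) (hμsum : ∑ i, μ i = 1)
    (α β : ℝ) (hα0 : 0 < α) (hα1 : α < 1) (hβ : 0 < β)
    (δ : ℝ) (hδ0 : 0 ≤ δ) (hδ1 : δ ≤ 1)
    (r r' : Fin n → ℝ) (l : ℝ) (fl fl' : Fin n → ℝ)
    (Pδ : Matrix (Fin n) (Fin n) ℝ) (hPδ : Pδ = P + δ • (P' - P))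
    (rδ : Fin n → ℝ) (hrδ : rδ = r + δ • (r' - r))
    (flδ : Fin n → ℝ) (hflδ : flδ = fl + δ • (fl' - fl))
    (ul : Fin n → ℝ) (hul : ul = (1 - α) • ((1 - α • P)⁻¹ *ᵥ fl))
    (η ηδ ξ ξδ : ℝ)
    (hη : η = (1 - α) * ((μ ᵥ* (1 - α • P)⁻¹) ⬝ᵥ r))
    (hηδ : ηδ = (1 - α) * ((μ ᵥ* (1 - α • Pδ)⁻¹) ⬝ᵥ rδ))
    (hξ : ξ = (1 - α) * ((μ ᵥ* (1 - α • P)⁻¹) ⬝ᵥ fl) + β * (η - l) ^ 2)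
    (hξδ : ξδ = (1 - α) * ((μ ᵥ* (1 - α • Pδ)⁻¹) ⬝ᵥ flδ) + β * (ηδ - l) ^ 2) :
    (∀ i j, 0 ≤ Pδ i j) ∧ (∀ i, ∑ j, Pδ i j = 1) ∧
    ξδ - ξ =
      δ * (μ ⬝ᵥ ((1 - α • Pδ)⁻¹ *ᵥ ((1 - α) • (fl' - fl) + α • ((P' - P) *ᵥ ul))))
        + β * (ηδ - l) ^ 2 - β * (η - l) ^ 2 :=
  stmt_17_general P P' hPnn hProw hP'nn hP'row μ α β hα0 hα1 δ hδ0 hδ1 l fl fl' Pδ hPδ flδ hflδ ul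
    hul η ηδ ξ ξδ hξ hξδ
end
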